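/- Let ρ be the canonical two-qubit state with parameters mx, my, mz, m'x, m'y, m'z, Cxx, Cyy, Czz, assumed positive semidefinite, and assume Re(trace ρ₊) ≠ 0 and Re(trace ρ₋) ≠ 0. Then for every z, u : ℝ, the probability that Bob obtains the outcome Π(z,u) satisfies P₊(Π(z,u)) − P₋(Π(z,u)) = −2·(7·sin α − sin(3α))·(my·m'x·cos u·sin z + sin u·sin z·(my·m'y − Cyy) + my·m'z·cos z) / ((−3 + cos(2α))² − 16·my²·sin²α). -/

import Mathlib

open Matrix Kronecker Complex
open scoped ComplexOrder

noncomputable section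

/-- Pauli matrix `σx`. -/
def σx : Matrix (Fin 2) (Fin 2) ℂ := !![0, 1; 1, 0]

/-- Pauli matrix `σy`. -/
def σy : Matrix (Fin 2) (Fin 2) ℂ := !![0, -Complex.I; Complex.I, 0]

/-- Pauli matrix `σz`. -/
def σz : Matrix (Fin 2) (Fin 2) ℂ := !![1, 0; 0, -1]

/-- The simulated PT-symmetric evolution operator at the chosen time. -/
def Upt (α : ℝ) : Matrix (Fin 2) (Fin 2) ℂ :=
  !![(Real.sin α : ℂ), -Complex.I; -Complex.I, -(Real.sin α : ℂ)]

/-- Alice's operation `A₊` (do nothing). -/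
def Apos : Matrix (Fin 2) (Fin 2) ℂ := 1

/-- Alice's operation `A₋` (bit flip `σx`). -/
def Aneg : Matrix (Fin 2) (Fin 2) ℂ := σx

/-- Unnormalized post-selected state after Alice applies `A₊` followed by the
simulated PT evolution. -/
def postPlus (α : ℝ) (ρ : Matrix (Fin 2 × Fin 2) (Fin 2 × Fin 2) ℂ) :
    Matrix (Fin 2 × Fin 2) (Fin 2 × Fin 2) ℂ :=
  ((Upt α * Apos) ⊗ₖ (1 : Matrix (Fin 2) (Fin 2) ℂ)) * ρ *
    ((Upt α * Apos) ⊗ₖ (1 : Matrix (Fin 2) (Fin 2) ℂ))ᴴ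

/-- Unnormalized post-selected state after Alice applies `A₋` followed by the
simulated PT evolution. -/
def postMinus (α : ℝ) (ρ : Matrix (Fin 2 × Fin 2) (Fin 2 × Fin 2) ℂ) :
    Matrix (Fin 2 × Fin 2) (Fin 2 × Fin 2) ℂ :=
  ((Upt α * Aneg) ⊗ₖ (1 : Matrix (Fin 2) (Fin 2) ℂ)) * ρ *
    ((Upt α * Aneg) ⊗ₖ (1 : Matrix (Fin 2) (Fin 2) ℂ))ᴴ

/-- Probability that Bob obtains outcome `Π` given Alice applied `A₊`. -/
def Pplus (α : ℝ) (ρ : Matrix (Fin 2 × Fin 2) (Fin 2 × Fin 2) ℂ)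
    (Pi : Matrix (Fin 2) (Fin 2) ℂ) : ℝ :=
  ((((1 : Matrix (Fin 2) (Fin 2) ℂ) ⊗ₖ Pi) * postPlus α ρ).trace).re /
    ((postPlus α ρ).trace).re

/-- Probability that Bob obtains outcome `Π` given Alice applied `A₋`. -/
def Pminus (α : ℝ) (ρ : Matrix (Fin 2 × Fin 2) (Fin 2 × Fin 2) ℂ)
    (Pi : Matrix (Fin 2) (Fin 2) ℂ) : ℝ :=
  ((((1 : Matrix (Fin 2) (Fin 2) ℂ) ⊗ₖ Pi) * postMinus α ρ).trace).re /
    ((postMinus α ρ).trace).re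

/-- Bob's `σy`-measurement projector onto `|+_y⟩ = (|0⟩ + i|1⟩)/√2`. -/
def Piy : Matrix (Fin 2) (Fin 2) ℂ :=
  (1/2 : ℂ) • !![1, -Complex.I; Complex.I, 1]

/-- Bob's rank-one projector `Π(z,u)` for an arbitrary projective measurement. -/
def Pizu (z u : ℝ) : Matrix (Fin 2) (Fin 2) ℂ :=
  !![((Real.cos (z/2))^2 : ℂ),
     (Real.cos (z/2) : ℂ) * (Real.sin (z/2) : ℂ) * Complex.exp (-(Complex.I * u));
     (Real.cos (z/2) : ℂ) * (Real.sin (z/2) : ℂ) * Complex.exp (Complex.I * u),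
     ((Real.sin (z/2))^2 : ℂ)]

/-- The single-qubit state `|+⟩ = (|0⟩ + |1⟩)/√2`. -/
def ketPlus : Fin 2 → ℂ := ![((1 / Real.sqrt 2 : ℝ) : ℂ), ((1 / Real.sqrt 2 : ℝ) : ℂ)]

/-- The single-qubit state `|−⟩ = (|0⟩ − |1⟩)/√2`. -/
def ketMinus : Fin 2 → ℂ := ![((1 / Real.sqrt 2 : ℝ) : ℂ), ((-(1 / Real.sqrt 2) : ℝ) : ℂ)]

/-- The (normalized) pure state `|ψ_{β,γ}⟩ = (β|++⟩ + γ|−−⟩)/√(β²+γ²)`. -/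
def ψpure (β γ : ℝ) : Fin 2 × Fin 2 → ℂ := fun q =>
  ((β : ℂ) * (ketPlus q.1 * ketPlus q.2) + (γ : ℂ) * (ketMinus q.1 * ketMinus q.2)) /
    ((Real.sqrt (β^2 + γ^2) : ℝ) : ℂ)

/-- The pure two-qubit density matrix `ρ_{β,γ} = |ψ_{β,γ}⟩⟨ψ_{β,γ}|`. -/
def ρpure (β γ : ℝ) : Matrix (Fin 2 × Fin 2) (Fin 2 × Fin 2) ℂ :=
  Matrix.vecMulVec (ψpure β γ) (fun q => starRingEnd ℂ (ψpure β γ q))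

/-- The maximally entangled state `|ψ⁺⟩ = (|00⟩ + |11⟩)/√2`. -/
def ψmax : Fin 2 × Fin 2 → ℂ := fun q =>
  if q.1 = q.2 then ((1 / Real.sqrt 2 : ℝ) : ℂ) else 0

/-- The two-qubit Werner state `ρ_W(p) = p |ψ⁺⟩⟨ψ⁺| + ((1-p)/4) 1`. -/
def ρWerner (p : ℝ) : Matrix (Fin 2 × Fin 2) (Fin 2 × Fin 2) ℂ :=
  (p : ℂ) • Matrix.vecMulVec ψmax (fun q => starRingEnd ℂ (ψmax q)) +
    (((1 - p) / 4 : ℝ) : ℂ) • 1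

/-- The canonical two-qubit state with magnetizations `mx my mz` (Alice),
`nx ny nz` (Bob) and diagonal correlators `Cxx Cyy Czz`. -/
def ρcan (mx my mz nx ny nz Cxx Cyy Czz : ℝ) :
    Matrix (Fin 2 × Fin 2) (Fin 2 × Fin 2) ℂ :=
  (1/4 : ℂ) • ((1 : Matrix (Fin 2 × Fin 2) (Fin 2 × Fin 2) ℂ)
    + (mx : ℂ) • (σx ⊗ₖ (1 : Matrix (Fin 2) (Fin 2) ℂ))
    + (my : ℂ) • (σy ⊗ₖ (1 : Matrix (Fin 2) (Fin 2) ℂ))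
    + (mz : ℂ) • (σz ⊗ₖ (1 : Matrix (Fin 2) (Fin 2) ℂ))
    + (nx : ℂ) • ((1 : Matrix (Fin 2) (Fin 2) ℂ) ⊗ₖ σx)
    + (ny : ℂ) • ((1 : Matrix (Fin 2) (Fin 2) ℂ) ⊗ₖ σy)
    + (nz : ℂ) • ((1 : Matrix (Fin 2) (Fin 2) ℂ) ⊗ₖ σz)
    + (Cxx : ℂ) • (σx ⊗ₖ σx)
    + (Cyy : ℂ) • (σy ⊗ₖ σy)
    + (Czz : ℂ) • (σz ⊗ₖ σz))

/-- Bob's reduced matrix: the partial trace over Alice's subsystem. -/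
def ptraceA (X : Matrix (Fin 2 × Fin 2) (Fin 2 × Fin 2) ℂ) :
    Matrix (Fin 2) (Fin 2) ℂ :=
  Matrix.of fun i j => ∑ k : Fin 2, X (k, i) (k, j)

/-- The positive semidefinite square root of a positive semidefinite matrix (the definition
`Matrix.PosSemidef.sqrt` of the older Mathlib, no longer present). -/
def Matrix.PosSemidef.sqrt {n : Type*} [Fintype n] [DecidableEq n] {A : Matrix n n ℂ}
    (hA : A.PosSemidef) : Matrix n n ℂ :=
  hA.1.eigenvectorUnitary.1 * diagonal ((↑) ∘ (Real.sqrt ·) ∘ hA.1.eigenvalues) *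
    (star hA.1.eigenvectorUnitary : Matrix n n ℂ)

/-- The trace distance `T(A,B) = (1/2) tr √((A-B)ᴴ (A-B))`, where the square
root is the positive semidefinite square root. -/
def traceDist (A B : Matrix (Fin 2) (Fin 2) ℂ) : ℝ :=
  (1/2) * (((Matrix.posSemidef_conjTranspose_mul_self (A - B)).sqrt).trace).re

/-! Alice's filter `M` enters Bob's statistics only through `Mᴴ M ⊗ Π`, and for `M = U_α`
and `M = U_α σx` one finds `Mᴴ M = (1 + sin²α) ± 2 sin α σy`. So numerator and denominator of
`P±` are `(1 + sin²α) ⟨1 ⊗ Π⟩ ± 2 sin α ⟨σy ⊗ Π⟩`, which for the canonical state only involve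
Bob's Bloch vector `m'`, `my` and `Cyy`. The formula follows on a common denominator, since
`7 sin α - sin 3α = 4 sin α (1 + sin²α)` and `(-3 + cos 2α)² = 4 (1 + sin²α)²`. -/

theorem trace_one_kronecker_mul_conj_kronecker_one {R m n : Type*} [CommRing R] [StarRing R]
    [Fintype m] [Fintype n] [DecidableEq m] [DecidableEq n] (M : Matrix m m R)
    (P : Matrix n n R) (ρ : Matrix (m × n) (m × n) R) :
    trace ((1 ⊗ₖ P) * ((M ⊗ₖ 1) * ρ * (M ⊗ₖ 1)ᴴ)) = trace (((Mᴴ * M) ⊗ₖ P) * ρ) := by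
  rw [conjTranspose_kronecker, conjTranspose_one, ← Matrix.mul_assoc, trace_mul_cycle,
    ← Matrix.mul_assoc, ← mul_kronecker_mul, ← mul_kronecker_mul]
  simp

theorem trace_kronecker_mul_kronecker {R m n : Type*} [CommRing R] [Fintype m] [Fintype n]
    (A C : Matrix m m R) (B D : Matrix n n R) :
    trace ((A ⊗ₖ B) * (C ⊗ₖ D)) = trace (A * C) * trace (B * D) := by
  rw [← mul_kronecker_mul, trace_kronecker]

theorem conjTranspose_mul_self_Upt_mul_Apos (α : ℝ) :
    (Upt α * Apos)ᴴ * (Upt α * Apos) =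
      (1 + Real.sin α ^ 2 : ℂ) • 1 + (2 * Real.sin α : ℂ) • σy := by
  unfold Upt Apos σy
  generalize Real.sin α = s
  ext i j
  fin_cases i <;> fin_cases j <;> simp [Matrix.mul_apply, Fin.sum_univ_two] <;> ring

theorem conjTranspose_mul_self_Upt_mul_Aneg (α : ℝ) :
    (Upt α * Aneg)ᴴ * (Upt α * Aneg) =
      (1 + Real.sin α ^ 2 : ℂ) • 1 - (2 * Real.sin α : ℂ) • σy := by
  unfold Upt Aneg σx σy
  generalize Real.sin α = s
  ext i j
  fin_cases i <;> fin_cases j <;> simp [Matrix.mul_apply, Fin.sum_univ_two] <;> ring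

theorem trace_one_kronecker_mul_postPlus (α : ℝ)
    (ρ : Matrix (Fin 2 × Fin 2) (Fin 2 × Fin 2) ℂ) (P : Matrix (Fin 2) (Fin 2) ℂ) :
    trace ((1 ⊗ₖ P) * postPlus α ρ) =
      (1 + Real.sin α ^ 2) * trace ((1 ⊗ₖ P) * ρ) +
        2 * Real.sin α * trace ((σy ⊗ₖ P) * ρ) := by
  rw [postPlus, trace_one_kronecker_mul_conj_kronecker_one, conjTranspose_mul_self_Upt_mul_Apos,
    add_kronecker, smul_kronecker, smul_kronecker, add_mul, smul_mul, smul_mul, trace_add,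
    trace_smul, trace_smul, smul_eq_mul, smul_eq_mul]

theorem trace_one_kronecker_mul_postMinus (α : ℝ)
    (ρ : Matrix (Fin 2 × Fin 2) (Fin 2 × Fin 2) ℂ) (P : Matrix (Fin 2) (Fin 2) ℂ) :
    trace ((1 ⊗ₖ P) * postMinus α ρ) =
      (1 + Real.sin α ^ 2) * trace ((1 ⊗ₖ P) * ρ) -
        2 * Real.sin α * trace ((σy ⊗ₖ P) * ρ) := by
  rw [postMinus, trace_one_kronecker_mul_conj_kronecker_one, conjTranspose_mul_self_Upt_mul_Aneg,
    sub_eq_add_neg, ← neg_smul, add_kronecker, smul_kronecker, smul_kronecker, add_mul, smul_mul,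
    smul_mul, trace_add, trace_smul, trace_smul, smul_eq_mul, smul_eq_mul, neg_mul,
    ← sub_eq_add_neg]

theorem Complex.exp_I_mul_ofReal (u : ℝ) :
    Complex.exp (Complex.I * u) = Real.cos u + Real.sin u * Complex.I := by
  rw [mul_comm, Complex.exp_mul_I, Complex.ofReal_cos, Complex.ofReal_sin]

theorem Complex.exp_neg_I_mul_ofReal (u : ℝ) :
    Complex.exp (-(Complex.I * u)) = Real.cos u - Real.sin u * Complex.I := by
  rw [show -(Complex.I * u) = Complex.I * ((-u : ℝ) : ℂ) by push_cast; ring,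
    Complex.exp_I_mul_ofReal, Real.cos_neg, Real.sin_neg]
  push_cast
  ring

section BlochVector

variable (z u : ℝ)

theorem trace_Pizu : trace (Pizu z u) = 1 := by
  simp only [Pizu, trace_fin_two_of]
  exact_mod_cast Real.cos_sq_add_sin_sq (z / 2)

theorem trace_Pizu_mul_σx : trace (Pizu z u * σx) = (Real.sin z * Real.cos u : ℝ) := by
  have h := Real.sin_two_mul (z / 2)
  rw [mul_div_cancel₀ _ two_ne_zero] at h
  simp [Pizu, σx, trace_fin_two, Complex.exp_I_mul_ofReal, Complex.exp_neg_I_mul_ofReal, h]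
  ring

theorem trace_Pizu_mul_σy : trace (Pizu z u * σy) = (Real.sin z * Real.sin u : ℝ) := by
  have h := Real.sin_two_mul (z / 2)
  rw [mul_div_cancel₀ _ two_ne_zero] at h
  simp [Pizu, σy, trace_fin_two, Complex.exp_I_mul_ofReal, Complex.exp_neg_I_mul_ofReal, h]
  ring_nf
  rw [Complex.I_sq]
  ring

theorem trace_Pizu_mul_σz : trace (Pizu z u * σz) = Real.cos z := by
  have h := Real.cos_two_mul' (z / 2)
  rw [mul_div_cancel₀ _ two_ne_zero] at h
  simp [Pizu, σz, trace_fin_two, h]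
  ring

end BlochVector

section CanonicalState

variable (mx my mz nx ny nz Cxx Cyy Czz : ℝ)

theorem trace_one_kronecker_mul_ρcan (P : Matrix (Fin 2) (Fin 2) ℂ) :
    trace ((1 ⊗ₖ P) * ρcan mx my mz nx ny nz Cxx Cyy Czz) =
      (trace P + nx * trace (P * σx) + ny * trace (P * σy) + nz * trace (P * σz)) / 2 := by
  simp only [ρcan, mul_add, mul_smul_comm, Matrix.mul_one, trace_add, trace_smul,
    trace_kronecker, trace_kronecker_mul_kronecker]
  simp [σx, σy, σz, trace_fin_two, Matrix.mul_apply]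
  ring_nf

theorem trace_σy_kronecker_mul_ρcan (P : Matrix (Fin 2) (Fin 2) ℂ) :
    trace ((σy ⊗ₖ P) * ρcan mx my mz nx ny nz Cxx Cyy Czz) =
      (my * trace P + Cyy * trace (P * σy)) / 2 := by
  simp only [ρcan, mul_add, mul_smul_comm, Matrix.mul_one, trace_add, trace_smul,
    trace_kronecker, trace_kronecker_mul_kronecker]
  simp [σx, σy, σz, trace_fin_two, Matrix.mul_apply]
  ring_nf

variable (α : ℝ)

theorem trace_postPlus_ρcan :
    trace (postPlus α (ρcan mx my mz nx ny nz Cxx Cyy Czz)) =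
      ((1 + Real.sin α ^ 2 + 2 * Real.sin α * my : ℝ) : ℂ) := by
  rw [← Matrix.one_mul (postPlus _ _), ← one_kronecker_one, trace_one_kronecker_mul_postPlus,
    trace_one_kronecker_mul_ρcan, trace_σy_kronecker_mul_ρcan]
  simp [σx, σy, σz, trace_fin_two]

theorem trace_postMinus_ρcan :
    trace (postMinus α (ρcan mx my mz nx ny nz Cxx Cyy Czz)) =
      ((1 + Real.sin α ^ 2 - 2 * Real.sin α * my : ℝ) : ℂ) := by
  rw [← Matrix.one_mul (postMinus _ _), ← one_kronecker_one, trace_one_kronecker_mul_postMinus,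
    trace_one_kronecker_mul_ρcan, trace_σy_kronecker_mul_ρcan]
  simp [σx, σy, σz, trace_fin_two]

variable (z u : ℝ)

theorem Pplus_ρcan_Pizu :
    Pplus α (ρcan mx my mz nx ny nz Cxx Cyy Czz) (Pizu z u) =
      ((1 + Real.sin α ^ 2) *
          (1 + nx * Real.sin z * Real.cos u + ny * Real.sin z * Real.sin u + nz * Real.cos z) / 2 +
        Real.sin α * (my + Cyy * Real.sin z * Real.sin u)) /
      (1 + Real.sin α ^ 2 + 2 * Real.sin α * my) := by
  rw [Pplus, trace_postPlus_ρcan, trace_one_kronecker_mul_postPlus, trace_one_kronecker_mul_ρcan,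
    trace_σy_kronecker_mul_ρcan, trace_Pizu, trace_Pizu_mul_σx, trace_Pizu_mul_σy,
    trace_Pizu_mul_σz]
  norm_cast
  ring

theorem Pminus_ρcan_Pizu :
    Pminus α (ρcan mx my mz nx ny nz Cxx Cyy Czz) (Pizu z u) =
      ((1 + Real.sin α ^ 2) *
          (1 + nx * Real.sin z * Real.cos u + ny * Real.sin z * Real.sin u + nz * Real.cos z) / 2 -
        Real.sin α * (my + Cyy * Real.sin z * Real.sin u)) /
      (1 + Real.sin α ^ 2 - 2 * Real.sin α * my) := by
  rw [Pminus, trace_postMinus_ρcan, trace_one_kronecker_mul_postMinus,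
    trace_one_kronecker_mul_ρcan, trace_σy_kronecker_mul_ρcan, trace_Pizu, trace_Pizu_mul_σx,
    trace_Pizu_mul_σy, trace_Pizu_mul_σz]
  norm_cast
  ring

end CanonicalState

theorem stmt7_general (α mx my mz nx ny nz Cxx Cyy Czz : ℝ)
    (ρ : Matrix (Fin 2 × Fin 2) (Fin 2 × Fin 2) ℂ)
    (hρ : ρ = ρcan mx my mz nx ny nz Cxx Cyy Czz)
    (hplus : ((postPlus α ρ).trace).re ≠ 0)
    (hminus : ((postMinus α ρ).trace).re ≠ 0) :
    ∀ z u : ℝ,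
      Pplus α ρ (Pizu z u) - Pminus α ρ (Pizu z u) =
        -2 * (7 * Real.sin α - Real.sin (3*α)) *
          (my * nx * Real.cos u * Real.sin z +
            Real.sin u * Real.sin z * (my * ny - Cyy) +
            my * nz * Real.cos z) /
          ((-3 + Real.cos (2*α))^2 - 16 * my^2 * (Real.sin α)^2) := by
  intro z u
  subst hρ
  rw [trace_postPlus_ρcan, Complex.ofReal_re] at hplus
  rw [trace_postMinus_ρcan, Complex.ofReal_re] at hminus
  have hden : (-3 + Real.cos (2 * α)) ^ 2 - 16 * my ^ 2 * Real.sin α ^ 2 =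
      4 * (1 + Real.sin α ^ 2 + 2 * Real.sin α * my) *
        (1 + Real.sin α ^ 2 - 2 * Real.sin α * my) := by
    rw [Real.cos_two_mul_eq_one_sub]
    ring
  rw [Pplus_ρcan_Pizu, Pminus_ρcan_Pizu, Real.sin_three_mul, hden, div_sub_div _ _ hplus hminus,
    div_eq_div_iff (mul_ne_zero hplus hminus) (mul_ne_zero (mul_ne_zero four_ne_zero hplus) hminus)]
  ring

/-- For the canonical two-qubit state and arbitrary rank-one projective
measurements `Π(z,u)` by Bob, the signaling difference is
`P₊(Π(z,u)) − P₋(Π(z,u)) = −2(7 sin α − sin 3α)(my m'x cos u sin z +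
sin u sin z (my m'y − Cyy) + my m'z cos z) / ((−3 + cos 2α)² − 16 my² sin²α)`. -/
theorem stmt7 (α mx my mz nx ny nz Cxx Cyy Czz : ℝ)
    (ρ : Matrix (Fin 2 × Fin 2) (Fin 2 × Fin 2) ℂ)
    (hρ : ρ = ρcan mx my mz nx ny nz Cxx Cyy Czz)
    (hpsd : ρ.PosSemidef)
    (hplus : ((postPlus α ρ).trace).re ≠ 0)
    (hminus : ((postMinus α ρ).trace).re ≠ 0) :
    ∀ z u : ℝ,
      Pplus α ρ (Pizu z u) - Pminus α ρ (Pizu z u) =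
        -2 * (7 * Real.sin α - Real.sin (3*α)) *
          (my * nx * Real.cos u * Real.sin z +
            Real.sin u * Real.sin z * (my * ny - Cyy) +
            my * nz * Real.cos z) /
          ((-3 + Real.cos (2*α))^2 - 16 * my^2 * (Real.sin α)^2) :=
  stmt7_general α mx my mz nx ny nz Cxx Cyy Czz ρ hρ hplus hminus
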